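/- arXiv:2506.12489 — 2 statements merged into one kernel-verified Lean document; each statement's English description precedes it below -/
import Mathlib

section
/- If p₁,...,p_d are independent Uniform(0,1) random variables and p₍₁₎ = min pᵢ, then lim_{t→+∞} P(tan((1/2 - p₍₁₎)π)/d > t)/P(W₀ > t) = 1, where W₀ is standard Cauchy. -/
open MeasureTheory ProbabilityTheory Real Filter Set
open Topology

/-- The standard Cauchy distribution, with density `1 / (π (1 + x²))`. -/
noncomputable def cauchyMeasure : Measure ℝ :=
  volume.withDensity fun x => ENNReal.ofReal (1 / (π * (1 + x ^ 2)))


lemma cauchy_tail (t : ℝ) :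
    (cauchyMeasure (Ioi t)).toReal = (π / 2 - arctan t) / π := by
  have hint : IntegrableOn (fun x : ℝ => 1 / (π * (1 + x ^ 2))) (Ioi t) := by
    have : (fun x : ℝ => 1 / (π * (1 + x ^ 2)))
        = fun x : ℝ => π⁻¹ * (1 + x ^ 2)⁻¹ := by
      funext x; rw [one_div, mul_inv]
    rw [this]
    exact (integrable_inv_one_add_sq.const_mul _).integrableOn
  have h1 : cauchyMeasure (Ioi t)
      = ENNReal.ofReal (∫ x in Ioi t, 1 / (π * (1 + x ^ 2))) := by
    rw [_root_.cauchyMeasure, withDensity_apply _ measurableSet_Ioi,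
      ← ofReal_integral_eq_lintegral_ofReal hint]
    exact Filter.Eventually.of_forall fun x => by positivity
  have h2 : (∫ x in Ioi t, 1 / (π * (1 + x ^ 2))) = (π / 2 - arctan t) / π := by
    have : (fun x : ℝ => 1 / (π * (1 + x ^ 2)))
        = fun x : ℝ => π⁻¹ * (1 + x ^ 2)⁻¹ := by
      funext x; rw [one_div, mul_inv]
    rw [this, MeasureTheory.integral_const_mul, integral_Ioi_inv_one_add_sq]
    ring
  rw [h1, h2, ENNReal.toReal_ofReal]
  have h := arctan_lt_pi_div_two t
  have hπ : (0:ℝ) < π := pi_pos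
  have : (0:ℝ) ≤ π / 2 - arctan t := by linarith
  positivity

lemma tan_event_iff {d : ℕ} (hd : 0 < d) (x : Fin d → ℝ) (hx : ∀ i, x i ∈ Ioc (0:ℝ) 1)
    {t : ℝ} (ht : 1 ≤ t) :
    t < tan ((1 / 2 - ⨅ i, x i) * π) / d ↔ ⨅ i, x i < 1 / 2 - arctan (d * t) / π := by
  haveI : Nonempty (Fin d) := Fin.pos_iff_nonempty.mp hd
  have hπ : (0:ℝ) < π := pi_pos
  have hd' : (0:ℝ) < d := by exact_mod_cast hd
  have hdt : (0:ℝ) < (d:ℝ) * t := by nlinarith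
  set m := ⨅ i, x i with hmdef
  set q := 1 / 2 - arctan ((d:ℝ) * t) / π with hqdef
  clear_value m q
  obtain ⟨i₀, hi₀⟩ := Finite.exists_min x
  have hbdd : BddBelow (range x) := (Set.finite_range x).bddBelow
  have hm : m = x i₀ := by
    rw [hmdef]; exact le_antisymm (ciInf_le hbdd i₀) (le_ciInf hi₀)
  have hm01 : m ∈ Ioc (0:ℝ) 1 := hm ▸ hx i₀
  have hq1 : (1 / 2 - q) * π = arctan ((d:ℝ) * t) := by
    rw [hqdef]; field_simp; ring
  have harcpos : 0 < arctan ((d:ℝ) * t) := by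
    have := arctan_strictMono hdt
    rwa [arctan_zero] at this
  have hqlt : q < 1 / 2 := by
    have : 0 < arctan ((d:ℝ) * t) / π := by positivity
    rw [hqdef]; linarith
  have hqpos : 0 < q := by
    have h2 := arctan_lt_pi_div_two ((d:ℝ) * t)
    have : arctan ((d:ℝ) * t) / π < 1 / 2 := by rw [div_lt_iff₀ hπ]; linarith
    rw [hqdef]; linarith
  constructor
  · intro h
    by_contra hcon
    push_neg at hcon
    have hang : tan ((1 / 2 - m) * π) ≤ (d:ℝ) * t := by
      rcases eq_or_lt_of_le hm01.2 with h1 | h1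
      · have he : (1 / 2 - m) * π = -(π / 2) := by rw [h1]; ring
        rw [he, tan_neg, tan_pi_div_two, neg_zero]
        positivity
      · have hθ : (1 / 2 - m) * π ∈ Ioo (-(π / 2)) (π / 2) := by
          constructor <;> nlinarith [hm01.1]
        have hle : (1 / 2 - m) * π ≤ (1 / 2 - q) * π := by nlinarith
        rw [hq1] at hle
        have := strictMonoOn_tan.monotoneOn hθ (arctan_mem_Ioo _) hle
        rwa [tan_arctan] at this
    have : tan ((1 / 2 - m) * π) / d ≤ t := by
      rw [div_le_iff₀ hd']; nlinarith
    linarith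
  · intro h
    have hθ : (1 / 2 - m) * π ∈ Ioo (-(π / 2)) (π / 2) := by
      constructor
      · have := mul_pos (show (0:ℝ) < 1 / 2 - m by linarith) hπ
        linarith
      · have := mul_lt_mul_of_pos_right (show 1 / 2 - m < 1 / 2 by nlinarith [hm01.1]) hπ
        linarith
    have hlt : arctan ((d:ℝ) * t) < (1 / 2 - m) * π := by
      rw [← hq1]; exact mul_lt_mul_of_pos_right (by linarith) hπ
    have h2 := strictMonoOn_tan (arctan_mem_Ioo _) hθ hlt
    rw [tan_arctan] at h2
    rw [lt_div_iff₀ hd']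
    nlinarith

lemma tan_event_iff' {d : ℕ} (hd : 0 < d) (x : Fin d → ℝ) (hx : ∀ i, x i ∈ Ioc (0:ℝ) 1)
    {t : ℝ} (ht : 1 ≤ t) :
    t < tan ((1 / 2 - ⨅ i, x i) * π) / d ↔ ∃ i, x i < 1 / 2 - arctan (d * t) / π := by
  haveI : Nonempty (Fin d) := Fin.pos_iff_nonempty.mp hd
  rw [tan_event_iff hd x hx ht]
  exact ciInf_lt_iff ((Set.finite_range x).bddBelow)


lemma numer_eq {Ω : Type*} [MeasurableSpace Ω] (μ : Measure Ω)
    [IsProbabilityMeasure μ] (d : ℕ) (hd : 0 < d) (p : Fin d → Ω → ℝ)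
    (hmeas : ∀ i, Measurable (p i))
    (hindep : iIndepFun p μ)
    (hunif : ∀ i, μ.map (p i) = volume.restrict (Icc (0 : ℝ) 1))
    {t : ℝ} (ht : 1 ≤ t) :
    (μ {ω | tan ((1 / 2 - ⨅ i, p i ω) * π) / d > t}).toReal
      = 1 - (1 - (1 / 2 - arctan (d * t) / π)) ^ d := by
  have hπ : (0:ℝ) < π := pi_pos
  have hd' : (0:ℝ) < d := by exact_mod_cast hd
  have hdt : (0:ℝ) < (d:ℝ) * t := by nlinarith
  set q := 1 / 2 - arctan ((d:ℝ) * t) / π with hqdef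
  have harcpos : 0 < arctan ((d:ℝ) * t) := by
    have := arctan_strictMono hdt
    rwa [arctan_zero] at this
  have hqlt : q < 1 / 2 := by
    have : 0 < arctan ((d:ℝ) * t) / π := by positivity
    rw [hqdef]; linarith
  have hqpos : 0 < q := by
    have h2 := arctan_lt_pi_div_two ((d:ℝ) * t)
    have : arctan ((d:ℝ) * t) / π < 1 / 2 := by rw [div_lt_iff₀ hπ]; linarith
    rw [hqdef]; linarith
  clear_value q
  have hae : ∀ᵐ ω ∂μ, ∀ i, p i ω ∈ Ioc (0:ℝ) 1 := by
    rw [ae_all_iff]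
    intro i
    have hset : {ω | ¬ p i ω ∈ Ioc (0:ℝ) 1} = p i ⁻¹' (Ioc (0:ℝ) 1)ᶜ := rfl
    rw [ae_iff]
    rw [show {ω | ¬ p i ω ∈ Ioc (0:ℝ) 1} = p i ⁻¹' (Ioc (0:ℝ) 1)ᶜ from rfl,
      ← Measure.map_apply (hmeas i) (measurableSet_Ioc.compl), hunif i,
      Measure.restrict_apply measurableSet_Ioc.compl]
    have : (Ioc (0:ℝ) 1)ᶜ ∩ Icc (0:ℝ) 1 = {0} := by
      ext y
      simp only [mem_inter_iff, mem_compl_iff, mem_Ioc, mem_Icc, mem_singleton_iff, not_and,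
        not_le]
      constructor
      · rintro ⟨h1, h2, h3⟩
        by_contra hy
        have : 0 < y := lt_of_le_of_ne h2 (Ne.symm hy)
        exact absurd (h1 this) (not_lt.mpr h3)
      · rintro rfl
        exact ⟨fun h => absurd h (lt_irrefl 0), le_refl 0, zero_le_one⟩
    rw [this, Real.volume_singleton]
  have hS : MeasurableSet (⋂ i, p i ⁻¹' Ici q) :=
    MeasurableSet.iInter fun i => hmeas i measurableSet_Ici
  have hEq : {ω | tan ((1 / 2 - ⨅ i, p i ω) * π) / d > t} =ᵐ[μ] ((⋂ i, p i ⁻¹' Ici q)ᶜ : Set Ω) := by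
    rw [Filter.eventuallyEq_set]
    filter_upwards [hae] with ω hω
    rw [Set.mem_compl_iff, Set.mem_iInter, hqdef]
    simp only [Set.mem_preimage, Set.mem_Ici, not_forall, not_le]
    exact tan_event_iff' hd (fun i => p i ω) hω ht
  have hprod : μ (⋂ i, p i ⁻¹' Ici q) = ∏ i, μ (p i ⁻¹' Ici q) :=
    hindep.meas_iInter fun i => ⟨Ici q, measurableSet_Ici, rfl⟩
  have hone : ∀ i, μ (p i ⁻¹' Ici q) = ENNReal.ofReal (1 - q) := by
    intro i
    rw [← Measure.map_apply (hmeas i) measurableSet_Ici, hunif i,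
      Measure.restrict_apply measurableSet_Ici]
    have : Ici q ∩ Icc (0:ℝ) 1 = Icc q 1 := by
      ext y
      simp only [mem_inter_iff, mem_Ici, mem_Icc]
      constructor
      · rintro ⟨h1, _, h3⟩; exact ⟨h1, h3⟩
      · rintro ⟨h1, h2⟩; exact ⟨h1, le_trans hqpos.le h1, h2⟩
    rw [this, Real.volume_Icc]
  have hle1 : (ENNReal.ofReal (1 - q)) ^ d ≤ 1 :=
    pow_le_one' (ENNReal.ofReal_le_one.mpr (by linarith)) d
  rw [measure_congr hEq, measure_compl hS (measure_ne_top μ _), hprod, measure_univ]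
  simp only [hone, Finset.prod_const, Finset.card_univ, Fintype.card_fin]
  rw [ENNReal.toReal_sub_of_le hle1 ENNReal.one_ne_top, ENNReal.toReal_one,
    ← ENNReal.ofReal_pow (by linarith), ENNReal.toReal_ofReal (pow_nonneg (by linarith) d)]

lemma ratio_tendsto (d : ℕ) (hd : 0 < d) :
    Tendsto (fun t : ℝ =>
        (1 - (1 - (1 / 2 - arctan (d * t) / π)) ^ d) / ((π / 2 - arctan t) / π))
      atTop (𝓝 1) := by
  have hπ : (0:ℝ) < π := pi_pos
  have hd' : (0:ℝ) < d := by exact_mod_cast hd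
  -- slope of arctan at 0
  have hslope : Tendsto (fun x : ℝ => arctan x / x) (𝓝[≠] (0:ℝ)) (𝓝 1) := by
    have h := hasDerivAt_arctan 0
    rw [hasDerivAt_iff_tendsto_slope] at h
    have heq : slope arctan 0 = fun x : ℝ => arctan x / x := by
      funext x
      rw [slope_def_field, arctan_zero, sub_zero, sub_zero]
    rw [heq] at h
    convert h using 2
    norm_num
  have hinv : ∀ c : ℝ, 0 < c → Tendsto (fun t : ℝ => (c * t)⁻¹) atTop (𝓝[≠] (0:ℝ)) := by
    intro c hc
    rw [tendsto_nhdsWithin_iff]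
    constructor
    · exact tendsto_inv_atTop_zero.comp (Tendsto.const_mul_atTop hc tendsto_id)
    · filter_upwards [eventually_gt_atTop 0] with t ht
      have : 0 < c * t := mul_pos hc ht
      simp only [Set.mem_compl_iff, Set.mem_singleton_iff]
      exact inv_ne_zero this.ne'
  have hA : Tendsto (fun t : ℝ => arctan (((d:ℝ) * t)⁻¹) / ((d:ℝ) * t)⁻¹) atTop (𝓝 1) :=
    hslope.comp (hinv _ hd')
  have hB : Tendsto (fun t : ℝ => arctan (((1:ℝ) * t)⁻¹) / ((1:ℝ) * t)⁻¹) atTop (𝓝 1) :=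
    hslope.comp (hinv _ one_pos)
  have hB' : Tendsto (fun t : ℝ => arctan t⁻¹ / t⁻¹) atTop (𝓝 1) := by
    refine hB.congr fun t => by rw [one_mul]
  -- u tends to 0
  have harct : Tendsto (fun t : ℝ => arctan ((d:ℝ) * t)) atTop (𝓝 (π / 2)) :=
    (tendsto_nhds_of_tendsto_nhdsWithin tendsto_arctan_atTop).comp
      (Tendsto.const_mul_atTop hd' tendsto_id)
  have hu : Tendsto (fun t : ℝ => 1 / 2 - arctan ((d:ℝ) * t) / π) atTop (𝓝 0) := by
    have h2 := tendsto_const_nhds (x := (1:ℝ)/2) (f := atTop) |>.sub (harct.div_const π)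
    have hval : (1:ℝ) / 2 - π / 2 / π = 0 := by field_simp; ring
    rwa [hval] at h2
  -- phi
  have hcont : Continuous fun u : ℝ => (∑ k ∈ Finset.range d, (1 - u) ^ k) / d := by
    apply Continuous.div_const
    exact continuous_finset_sum _ fun k _ => (continuous_const.sub continuous_id).pow k
  have hφ : Tendsto (fun t : ℝ =>
      (∑ k ∈ Finset.range d, (1 - (1 / 2 - arctan ((d:ℝ) * t) / π)) ^ k) / d)
      atTop (𝓝 1) := by
    have h3 := (hcont.tendsto 0).comp hu
    have hval : (∑ k ∈ Finset.range d, (1 - (0:ℝ)) ^ k) / d = 1 := by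
      simp
      simp [hd'.ne', hd.ne']
    rw [Function.comp_def] at h3
    rwa [hval] at h3
  -- combine
  have hfull : Tendsto (fun t : ℝ =>
      ((∑ k ∈ Finset.range d, (1 - (1 / 2 - arctan ((d:ℝ) * t) / π)) ^ k) / d) *
        ((arctan (((d:ℝ) * t)⁻¹) / ((d:ℝ) * t)⁻¹) / (arctan t⁻¹ / t⁻¹)))
      atTop (𝓝 1) := by
    have h5 := hφ.mul (hA.div hB' one_ne_zero)
    rwa [show (1:ℝ) * (1 / 1) = 1 from by norm_num] at h5
  refine hfull.congr' ?_
  filter_upwards [eventually_ge_atTop 1] with t ht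
  have ht0 : (0:ℝ) < t := lt_of_lt_of_le one_pos ht
  have hdt : (0:ℝ) < (d:ℝ) * t := by positivity
  set u := 1 / 2 - arctan ((d:ℝ) * t) / π with hudef
  set s := ∑ k ∈ Finset.range d, (1 - u) ^ k with hsdef
  have e1 : 1 - (1 - u) ^ d = u * s := by
    have hg := geom_sum_mul (1 - u) d
    rw [← hsdef] at hg
    linear_combination hg
  have e2 : π / 2 - arctan t = arctan t⁻¹ := (arctan_inv_of_pos ht0).symm
  have e3 : arctan (((d:ℝ) * t)⁻¹) = π / 2 - arctan ((d:ℝ) * t) := arctan_inv_of_pos hdt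
  have e4 : u = arctan (((d:ℝ) * t)⁻¹) / π := by
    rw [e3, hudef]; field_simp
  have harcpos : 0 < arctan t⁻¹ := by
    have := arctan_strictMono (inv_pos.mpr ht0)
    rwa [arctan_zero] at this
  rw [e1, e2, e4]
  field_simp

/-- For independent `Uniform(0,1)` p-values `p₁,...,p_d` and `p₍₁₎ = min pᵢ`,
`lim_{t→+∞} P(tan((1/2 - p₍₁₎)π)/d > t)/P(W₀ > t) = 1`, `W₀` standard Cauchy. -/
theorem tmin_tail_ratio_indep {Ω : Type*} [MeasurableSpace Ω] (μ : Measure Ω)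
    [IsProbabilityMeasure μ] (d : ℕ) (hd : 0 < d) (p : Fin d → Ω → ℝ)
    (hmeas : ∀ i, Measurable (p i))
    (hindep : iIndepFun p μ)
    (hunif : ∀ i, μ.map (p i) = volume.restrict (Icc (0 : ℝ) 1)) :
    Tendsto (fun t : ℝ =>
        (μ {ω | tan ((1 / 2 - ⨅ i, p i ω) * π) / d > t}).toReal /
          (cauchyMeasure (Ioi t)).toReal)
      atTop (nhds 1) := by
  refine Tendsto.congr' ?_ (ratio_tendsto d hd)
  filter_upwards [eventually_ge_atTop 1] with t ht
  rw [numer_eq μ d hd p hmeas hindep hunif ht, cauchy_tail]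
end

section
/- Let p ∈ (0,1) be a p-value and q = 1 - p the p-value of the same one-sided test under the opposite null hypothesis. Then with equal weights, the Cauchy combination statistic of (p, q) is T_CCT = (1/2)[tan((1/2-p)π) + tan((1/2-q)π)] = 0, while the truncated statistic T_TCCT = (1/2)[tan((1/2-p)π)·1{p<1/2} + tan((1/2-q)π)·1{q<1/2}] = (1/2)tan((1/2 - min(p,q))π) > 0 whenever p ≠ 1/2. -/
open Real Set

theorem tan_half_sub_one_sub_mul_pi (p : ℝ) :
    tan ((1 / 2 - (1 - p)) * π) = -tan ((1 / 2 - p) * π) := by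
  rw [← tan_neg]
  ring_nf

theorem tan_half_sub_mul_pi_pos {x : ℝ} (hx₀ : 0 < x) (hx : x < 1 / 2) :
    0 < tan ((1 / 2 - x) * π) := by
  apply tan_pos_of_pos_of_lt_pi_div_two <;> nlinarith [pi_pos]

/-- Of `p` and `1 - p` exactly one lies below `1 / 2`, namely their minimum. -/
theorem ite_lt_half_add_ite_one_sub_lt_half (f : ℝ → ℝ) {p : ℝ} (hp : p ≠ 1 / 2) :
    ((if p < 1 / 2 then f p else 0) + if 1 - p < 1 / 2 then f (1 - p) else 0) =
      f (min p (1 - p)) := by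
  rcases hp.lt_or_gt with hp | hp
  · rw [if_pos hp, if_neg (by linarith), min_eq_left (by linarith), add_zero]
  · rw [if_neg (by linarith), if_pos (by linarith), min_eq_right (by linarith), zero_add]

/-- For perfectly negatively dependent one-sided tests with p-values `p` and `q = 1-p`,
the equal-weight Cauchy combination statistic is 0, while the truncated statistic equals
`(1/2) tan((1/2 - min(p,q))π) > 0` whenever `p ≠ 1/2`. -/
theorem cct_zero_tcct_positive (p : ℝ) (hp : p ∈ Ioo (0 : ℝ) 1) (q : ℝ)
    (hq : q = 1 - p) :
    (1 / 2) * (tan ((1 / 2 - p) * π) + tan ((1 / 2 - q) * π)) = 0 ∧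
    (p ≠ 1 / 2 →
      (1 / 2) * ((if p < 1 / 2 then tan ((1 / 2 - p) * π) else 0) +
          (if q < 1 / 2 then tan ((1 / 2 - q) * π) else 0)) =
        (1 / 2) * tan ((1 / 2 - min p q) * π) ∧
      0 < (1 / 2) * tan ((1 / 2 - min p q) * π)) := by
  subst hq
  obtain ⟨hp₀, hp₁⟩ := hp
  refine ⟨by rw [tan_half_sub_one_sub_mul_pi]; ring, fun hne => ⟨?_, ?_⟩⟩
  · rw [ite_lt_half_add_ite_one_sub_lt_half (fun x => tan ((1 / 2 - x) * π)) hne]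
  · have hmin₀ : 0 < min p (1 - p) := lt_min hp₀ (by linarith)
    have hmin : min p (1 - p) < 1 / 2 := by
      rcases hne.lt_or_gt with h | h
      · exact min_lt_of_left_lt h
      · exact min_lt_of_right_lt (by linarith)
    exact mul_pos one_half_pos (tan_half_sub_mul_pi_pos hmin₀ hmin)
end
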